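/- Let (Z_n, ρ_n), n ≥ 1, and (Z, ρ_0) be compact semi-metric spaces, and suppose there exist ε_n-isometries f_n : (Z_n,ρ_n) → (Z,ρ_0) with ε_n → 0+. Then for every δ > 0 there exists N such that for all n ≥ N there exists a δ-isometry g_n : (Z,ρ_0) → (Z_n,ρ_n); in particular d_AI((Z_n,ρ_n),(Z,ρ_0)) → 0. -/

import Mathlib

open Filter Topology Metric
open scoped ENNReal

universe u v

/-- A semi-metric (separating function) on a compact metrizable space: continuous, symmetric,
nonnegative, and vanishing exactly on the diagonal. -/
def IsSemiMetric {Z : Type*} [TopologicalSpace Z] (ρ : Z → Z → ℝ) : Prop :=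
  Continuous (Function.uncurry ρ) ∧ (∀ ξ η, ρ ξ η = ρ η ξ) ∧
    (∀ ξ η, 0 ≤ ρ ξ η) ∧ ∀ ξ η, ρ ξ η = 0 ↔ ξ = η

/-- An antipodal function: a semi-metric of diameter at most one such that every point has an
antipode at distance one. -/
def IsAntipodalFn {Z : Type*} [TopologicalSpace Z] (ρ : Z → Z → ℝ) : Prop :=
  IsSemiMetric ρ ∧ (∀ ξ η, ρ ξ η ≤ 1) ∧ ∀ ξ, ∃ η, ρ ξ η = 1

/-- An `ε`-isometry between semi-metric spaces: distortion less than `ε`, and the image is an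
`ε`-net. -/
def IsEpsIsometry {Z₁ : Type*} {Z₂ : Type*} (ρ₁ : Z₁ → Z₁ → ℝ) (ρ₂ : Z₂ → Z₂ → ℝ)
    (ε : ℝ) (f : Z₁ → Z₂) : Prop :=
  (∀ ξ η : Z₁, |ρ₂ (f ξ) (f η) - ρ₁ ξ η| < ε) ∧ ∀ ζ : Z₂, ∃ ξ : Z₁, ρ₂ (f ξ) ζ < ε

/-- The almost-isometry (AI) distance between two semi-metric spaces: the infimum of all `ε > 0`
for which there are `ε`-isometries in both directions (`∞` if there are none). -/
noncomputable def dAI {Z₁ : Type*} {Z₂ : Type*} (ρ₁ : Z₁ → Z₁ → ℝ) (ρ₂ : Z₂ → Z₂ → ℝ) : ℝ≥0∞ :=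
  ⨅ (ε : ℝ) (_ : 0 < ε) (_ : ∃ f : Z₁ → Z₂, IsEpsIsometry ρ₁ ρ₂ ε f)
    (_ : ∃ g : Z₂ → Z₁, IsEpsIsometry ρ₂ ρ₁ ε g), ENNReal.ofReal ε

/-!
If `f : Zₙ → W` is an `ε`-isometry, choosing `g ζ` with `ρ₀ (f (g ζ)) ζ < ε` gives a map
`g : W → Zₙ` whose image is a `2ε`-net and whose distortion is at most `ε` plus the change of
`ρ₀ ζ ξ` under `ε`-perturbations of `ζ` and `ξ`. On the compact space `W` the continuous
semi-metric `ρ₀` is uniformly continuous in this sense, so that change is small once `ε` is,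
independently of `Zₙ`.
-/

theorem IsSemiMetric.exists_pos_abs_sub_lt {W : Type*} [TopologicalSpace W] [CompactSpace W]
    {ρ : W → W → ℝ} (hρ : IsSemiMetric ρ) {δ : ℝ} (hδ : 0 < δ) :
    ∃ η > 0, ∀ a a' b b' : W, ρ a a' < η → ρ b b' < η → |ρ a b - ρ a' b'| < δ := by
  obtain ⟨hc, -, hnonneg, hzero⟩ := hρ
  let S : Set (W × W × W × W) := {x | δ ≤ |ρ x.1 x.2.2.1 - ρ x.2.1 x.2.2.2|}
  let G : W × W × W × W → ℝ := fun x => max (ρ x.1 x.2.1) (ρ x.2.2.1 x.2.2.2)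
  have hS : IsCompact S := by
    refine (isClosed_le continuous_const (Continuous.abs (Continuous.sub ?_ ?_))).isCompact
    · exact hc.comp₂ continuous_fst continuous_snd.snd.fst
    · exact hc.comp₂ continuous_snd.fst continuous_snd.snd.snd
  have hG : Continuous G :=
    (hc.comp₂ continuous_fst continuous_snd.fst).max
      (hc.comp₂ continuous_snd.snd.fst continuous_snd.snd.snd)
  have hGpos : ∀ x ∈ S, 0 < G x := by
    rintro ⟨a, a', b, b'⟩ hx
    by_contra! h
    obtain rfl : a = a' :=
      (hzero _ _).1 (le_antisymm ((le_max_left _ _).trans h) (hnonneg _ _))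
    obtain rfl : b = b' :=
      (hzero _ _).1 (le_antisymm ((le_max_right _ _).trans h) (hnonneg _ _))
    simp only [S, Set.mem_ofPred_eq, sub_self, abs_zero] at hx
    linarith
  obtain ⟨η, hη, hGη⟩ := hS.exists_forall_le' hG.continuousOn hGpos
  refine ⟨η, hη, fun a a' b b' ha hb => ?_⟩
  by_contra! h
  exact (max_lt ha hb).not_ge (hGη (a, a', b, b') h)

section IsEpsIsometry

variable {Z₁ Z₂ : Type*} {ρ₁ : Z₁ → Z₁ → ℝ} {ρ₂ : Z₂ → Z₂ → ℝ} {ε δ : ℝ}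

theorem IsEpsIsometry.mono {f : Z₁ → Z₂} (hf : IsEpsIsometry ρ₁ ρ₂ ε f) (hεδ : ε ≤ δ) :
    IsEpsIsometry ρ₁ ρ₂ δ f :=
  ⟨fun ξ η => (hf.1 ξ η).trans_le hεδ,
    fun ζ => (hf.2 ζ).imp fun _ hξ => hξ.trans_le hεδ⟩

theorem IsEpsIsometry.exists_inverse {f : Z₁ → Z₂} (hf : IsEpsIsometry ρ₁ ρ₂ ε f) (hεδ : ε ≤ δ)
    (hρ₂ : ∀ a a' b b', ρ₂ a a' < ε → ρ₂ b b' < ε → |ρ₂ a b - ρ₂ a' b'| < δ) :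
    ∃ g : Z₂ → Z₁, IsEpsIsometry ρ₂ ρ₁ (ε + δ) g := by
  obtain ⟨hdist, hnet⟩ := hf
  choose g hg using hnet
  refine ⟨g, fun ζ ξ => ?_, fun ξ => ⟨f ξ, ?_⟩⟩
  · calc |ρ₁ (g ζ) (g ξ) - ρ₂ ζ ξ|
        ≤ |ρ₁ (g ζ) (g ξ) - ρ₂ (f (g ζ)) (f (g ξ))| + |ρ₂ (f (g ζ)) (f (g ξ)) - ρ₂ ζ ξ| :=
          abs_sub_le _ _ _
      _ < ε + δ := by
          rw [abs_sub_comm]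
          exact add_lt_add (hdist _ _) (hρ₂ _ _ _ _ (hg ζ) (hg ξ))
  · have := (abs_lt.mp (hdist (g (f ξ)) ξ)).1
    linarith [hg (f ξ)]

theorem dAI_le_ofReal (hε : 0 < ε) {f : Z₁ → Z₂} (hf : IsEpsIsometry ρ₁ ρ₂ ε f) {g : Z₂ → Z₁}
    (hg : IsEpsIsometry ρ₂ ρ₁ ε g) : dAI ρ₁ ρ₂ ≤ ENNReal.ofReal ε :=
  iInf_le_of_le ε <| iInf_le_of_le hε <| iInf_le_of_le ⟨f, hf⟩ <| iInf_le_of_le ⟨g, hg⟩ le_rfl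

end IsEpsIsometry

theorem IsSemiMetric.exists_pos_forall_exists_inverse {W : Type*} [TopologicalSpace W]
    [CompactSpace W] {ρ₀ : W → W → ℝ} (hρ₀ : IsSemiMetric ρ₀) {δ : ℝ} (hδ : 0 < δ) :
    ∃ ε₀ > 0, ∀ {Z : Type u} {ρ : Z → Z → ℝ} {ε : ℝ} {f : Z → W}, ε < ε₀ →
      IsEpsIsometry ρ ρ₀ ε f → ∃ g : W → Z, IsEpsIsometry ρ₀ ρ δ g := by
  obtain ⟨η, hη, hρ₀η⟩ := hρ₀.exists_pos_abs_sub_lt (half_pos hδ)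
  refine ⟨min η (δ / 2), lt_min hη (half_pos hδ), fun hε hf => ?_⟩
  have hεη : _ < η := hε.trans_le (min_le_left _ _)
  have hεδ : _ < δ / 2 := hε.trans_le (min_le_right _ _)
  obtain ⟨g, hg⟩ := hf.exists_inverse hεδ.le
    fun a a' b b' ha hb => hρ₀η a a' b b' (ha.trans hεη) (hb.trans hεη)
  exact ⟨g, hg.mono (by linarith)⟩

theorem exists_almost_inverse_isometries_general
    {Z : ℕ → Type u} (ρ : ∀ n, Z n → Z n → ℝ)
    {W : Type v} [TopologicalSpace W] [CompactSpace W]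
    (ρ₀ : W → W → ℝ) (hρ₀ : IsSemiMetric ρ₀)
    (ε : ℕ → ℝ) (hε0 : Tendsto ε atTop (𝓝 0))
    (hf : ∀ n, ∃ f : Z n → W, IsEpsIsometry (ρ n) ρ₀ (ε n) f) :
    (∀ δ : ℝ, 0 < δ → ∃ N : ℕ, ∀ n, N ≤ n →
      ∃ g : W → Z n, IsEpsIsometry ρ₀ (ρ n) δ g) ∧
    Tendsto (fun n => dAI (ρ n) ρ₀) atTop (𝓝 0) := by
  have hinv : ∀ δ > 0, ∀ᶠ n in atTop, ∃ g : W → Z n, IsEpsIsometry ρ₀ (ρ n) δ g := by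
    intro δ hδ
    obtain ⟨ε₀, hε₀, hsmall⟩ := hρ₀.exists_pos_forall_exists_inverse hδ
    filter_upwards [hε0.eventually_lt_const hε₀] with n hn
    obtain ⟨f, hf⟩ := hf n
    exact hsmall hn hf
  refine ⟨fun δ hδ => eventually_atTop.mp (hinv δ hδ), ENNReal.tendsto_nhds_zero.mpr ?_⟩
  intro r hr
  obtain ⟨δ, -, hδ, hδr⟩ := ENNReal.lt_iff_exists_real_btwn.mp hr
  rw [ENNReal.ofReal_pos] at hδ
  filter_upwards [hinv δ hδ, hε0.eventually_lt_const hδ] with n ⟨g, hg⟩ hn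
  obtain ⟨f, hf⟩ := hf n
  exact (dAI_le_ofReal hδ (hf.mono hn.le) hg).trans hδr.le

/-- If there are `ε n`-isometries `f n : (Z n, ρ n) → (W, ρ₀)` between compact
semi-metric spaces with `ε n → 0+`, then for every `δ > 0` there are `δ`-isometries
`(W, ρ₀) → (Z n, ρ n)` for all sufficiently large `n`; in particular
`d_AI((Z n, ρ n), (W, ρ₀)) → 0`. -/
theorem exists_almost_inverse_isometries
    {Z : ℕ → Type u} [∀ n, TopologicalSpace (Z n)] [∀ n, CompactSpace (Z n)]
    [∀ n, TopologicalSpace.MetrizableSpace (Z n)]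
    (ρ : ∀ n, Z n → Z n → ℝ) (hρ : ∀ n, IsSemiMetric (ρ n))
    {W : Type v} [TopologicalSpace W] [CompactSpace W] [TopologicalSpace.MetrizableSpace W]
    (ρ₀ : W → W → ℝ) (hρ₀ : IsSemiMetric ρ₀)
    (ε : ℕ → ℝ) (hε : ∀ n, 0 < ε n) (hε0 : Tendsto ε atTop (𝓝 0))
    (hf : ∀ n, ∃ f : Z n → W, IsEpsIsometry (ρ n) ρ₀ (ε n) f) :
    (∀ δ : ℝ, 0 < δ → ∃ N : ℕ, ∀ n, N ≤ n →
      ∃ g : W → Z n, IsEpsIsometry ρ₀ (ρ n) δ g) ∧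
    Tendsto (fun n => dAI (ρ n) ρ₀) atTop (𝓝 0) :=
  exists_almost_inverse_isometries_general ρ ρ₀ hρ₀ ε hε0 hf
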